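/- arXiv:2006.09345 — 4 statements merged into one kernel-verified Lean document; each statement's English description precedes it below -/
import Mathlib

section
/- Let A > 0, B ≥ 0 and α > 1 be real numbers. There exists a constant C > 0, depending only on A, B and α, such that for every y₀ ≥ 0 and every nonnegative solution y of the initial value problem (⋆) one has y(t) ≤ C·t^{1/(1−α)} + C for all t > 0. -/
/-!
The function `u(t) = (A (α - 1) t)^(1/(1-α))` solves `u' = -A u^α` and blows up at `t = 0`.
Choose `M > 0` with `A M^α > B`. By superadditivity of `s ↦ s^α`, the barrier `u + M` satisfies
`-A (u + M)^α + B < -A u^α = (u + M)'`, so a solution `y` can never cross it from below.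
Since `u + M → ∞` as `t → 0⁺` while `y` is continuous at `0`, `y` starts below the barrier at
some small `ε > 0`, hence `y ≤ u + M` on `(0, ∞)`, which is the claimed bound with
`C = max ((A (α - 1))^(1/(1-α))) M`.
-/

open Set Filter Topology

section BlowupBarrier

variable {A α : ℝ}

theorem exists_pos_lt_mul_rpow (hA : 0 < A) (hα : 1 ≤ α) (B : ℝ) :
    ∃ M : ℝ, 0 < M ∧ B < A * M ^ α := by
  set M := max 1 (B / A) + 1
  have hM : 1 ≤ M := by linarith [le_max_left 1 (B / A)]
  have hBM : B / A < M := by linarith [le_max_right 1 (B / A)]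
  refine ⟨M, by linarith, ?_⟩
  calc B < A * M := (div_lt_iff₀' hA).mp hBM
    _ ≤ A * M ^ α := by gcongr; exact Real.self_le_rpow_of_one_le hM hα

noncomputable def blowupProfile (A α t : ℝ) : ℝ :=
  (A * (α - 1) * t) ^ (1 / (1 - α))

theorem hasDerivAt_blowupProfile (hA : 0 < A) (hα : 1 < α) {t : ℝ} (ht : 0 < t) :
    HasDerivAt (blowupProfile A α) (-A * blowupProfile A α t ^ α) t := by
  have hct : 0 < A * (α - 1) * t := mul_pos (mul_pos hA (by linarith)) ht
  have hexp : 1 / (1 - α) * α = 1 / (1 - α) - 1 := by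
    field_simp [show 1 - α ≠ 0 by linarith]
    ring
  have h : HasDerivAt (blowupProfile A α)
      (A * (α - 1) * 1 * (1 / (1 - α)) * (A * (α - 1) * t) ^ (1 / (1 - α) - 1)) t :=
    ((hasDerivAt_id' t).const_mul (A * (α - 1))).rpow_const (Or.inl hct.ne')
  refine h.congr_deriv ?_
  rw [blowupProfile, ← Real.rpow_mul hct.le, hexp]
  field_simp [show 1 - α ≠ 0 by linarith]
  ring

theorem tendsto_blowupProfile_nhdsGT_zero (hA : 0 < A) (hα : 1 < α) :
    Tendsto (blowupProfile A α) (𝓝[>] 0) atTop := by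
  have hc : 0 < A * (α - 1) := mul_pos hA (by linarith)
  have hscale : Tendsto (fun t => A * (α - 1) * t) (𝓝[>] 0) (𝓝[>] 0) := by
    refine tendsto_nhdsWithin_of_tendsto_nhds_of_eventually_within _ ?_ ?_
    · simpa using ((continuous_const_mul (A * (α - 1))).tendsto 0).mono_left nhdsWithin_le_nhds
    · filter_upwards [self_mem_nhdsWithin] with t (ht : 0 < t)
      exact mul_pos hc ht
  exact (tendsto_rpow_neg_nhdsGT_zero (div_neg_of_pos_of_neg one_pos (by linarith))).comp hscale

theorem le_blowupProfile_add_of_le {y : ℝ → ℝ} {B M a b : ℝ} (hA : 0 < A) (hα : 1 < α)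
    (hM : 0 ≤ M) (hBM : B < A * M ^ α) (ha : 0 < a) (hy : ContinuousOn y (Icc a b))
    (hy' : ∀ t ∈ Ico a b, HasDerivAt y (-A * y t ^ α + B) t)
    (hya : y a ≤ blowupProfile A α a + M) :
    ∀ t ∈ Icc a b, y t ≤ blowupProfile A α t + M := by
  have hu' : ∀ t ∈ Icc a b, HasDerivAt (fun s => blowupProfile A α s + M)
      (-A * blowupProfile A α t ^ α) t := fun t ht =>
    (hasDerivAt_blowupProfile hA hα (ha.trans_le ht.1)).add_const M
  refine image_le_of_deriv_right_lt_deriv_boundary' hy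
    (fun t ht => (hy' t ht).hasDerivWithinAt) hya
    (fun t ht => (hu' t ht).continuousAt.continuousWithinAt)
    (fun t ht => (hu' t (Ico_subset_Icc_self ht)).hasDerivWithinAt) ?_
  intro t ht hcontact
  have hu : 0 ≤ blowupProfile A α t :=
    Real.rpow_nonneg (mul_pos (mul_pos hA (by linarith)) (ha.trans_le ht.1)).le _
  have hsuper := mul_le_mul_of_nonneg_left (Real.add_rpow_le_rpow_add hu hM hα.le) hA.le
  rw [hcontact]
  linarith

theorem le_blowupProfile_add {y : ℝ → ℝ} {B M : ℝ} (hA : 0 < A) (hα : 1 < α)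
    (hM : 0 ≤ M) (hBM : B < A * M ^ α) (hy : ContinuousOn y (Ici 0))
    (hy' : ∀ t, 0 < t → HasDerivAt y (-A * y t ^ α + B) t) {t : ℝ} (ht : 0 < t) :
    y t ≤ blowupProfile A α t + M := by
  have hy0 : Tendsto y (𝓝[>] 0) (𝓝 (y 0)) :=
    (hy 0 self_mem_Ici).tendsto.mono_left (nhdsWithin_mono 0 Ioi_subset_Ici_self)
  obtain ⟨ε, hεu, hεy, hε⟩ := ((tendsto_blowupProfile_nhdsGT_zero hA hα).eventually_ge_atTop
    (y 0 + 1)).and ((hy0.eventually_le_const (lt_add_one (y 0))).and (Ioo_mem_nhdsGT ht))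
    |>.exists
  exact le_blowupProfile_add_of_le hA hα hM hBM hε.1
    (hy.mono fun s hs => hε.1.le.trans hs.1) (fun s hs => hy' s (hε.1.trans_le hs.1))
    (by linarith) t ⟨hε.2.le, le_rfl⟩

end BlowupBarrier

theorem stmt0_general (A B α : ℝ) (hA : 0 < A) (hα : 1 < α) :
    ∃ C : ℝ, 0 < C ∧
      ∀ (y₀ : ℝ), 0 ≤ y₀ →
        ∀ y : ℝ → ℝ,
          ContinuousOn y (Set.Ici 0) →
          (∀ t : ℝ, 0 < t → HasDerivAt y (-A * (y t) ^ α + B) t) →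
          y 0 = y₀ →
          (∀ t : ℝ, 0 ≤ t → 0 ≤ y t) →
          ∀ t : ℝ, 0 < t → y t ≤ C * t ^ (1 / (1 - α)) + C := by
  obtain ⟨M, hM, hBM⟩ := exists_pos_lt_mul_rpow hA hα.le B
  set K := (A * (α - 1)) ^ (1 / (1 - α))
  refine ⟨max K M, hM.trans_le (le_max_right _ _), ?_⟩
  intro _ _ y hy hy' _ _ t ht
  have hbound := le_blowupProfile_add hA hα hM.le hBM hy hy' ht
  rw [blowupProfile, Real.mul_rpow (mul_pos hA (by linarith)).le ht.le] at hbound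
  have hKC := mul_le_mul_of_nonneg_right (le_max_left K M) (Real.rpow_nonneg ht.le (1 / (1 - α)))
  linarith [le_max_right K M]

/-- For real numbers `A > 0`, `B ≥ 0`, `α > 1` there is a constant
`C > 0`, depending only on `A`, `B` and `α`, such that every nonnegative solution
`y` of the initial value problem `y' = -A y^α + B`, `y 0 = y₀` with `y₀ ≥ 0`
satisfies `y t ≤ C * t^(1/(1-α)) + C` for all `t > 0`. -/
theorem stmt0 (A B α : ℝ) (hA : 0 < A) (hB : 0 ≤ B) (hα : 1 < α) :
    ∃ C : ℝ, 0 < C ∧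
      ∀ (y₀ : ℝ), 0 ≤ y₀ →
        ∀ y : ℝ → ℝ,
          ContinuousOn y (Set.Ici 0) →
          (∀ t : ℝ, 0 < t → HasDerivAt y (-A * (y t) ^ α + B) t) →
          y 0 = y₀ →
          (∀ t : ℝ, 0 ≤ t → 0 ≤ y t) →
          ∀ t : ℝ, 0 < t → y t ≤ C * t ^ (1 / (1 - α)) + C :=
  stmt0_general A B α hA hα
end

section
/- Let A > 0, B ≥ 0 and α > 1 be real numbers, let y₀ ≥ 0 and let y be a nonnegative solution of the initial value problem (⋆). Then y(t) ≤ (A(α−1))^{1/(1−α)}·t^{1/(1−α)} + (B/A)^{1/α} for all t > 0. -/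
/-!
`u(s) = (A(α-1))^{1/(1-α)} s^{1/(1-α)}` solves `u' = -A u^α` and blows up at `0⁺`, and
`K = (B/A)^{1/α}` is the equilibrium `A K^α = B`. By superadditivity of `x ↦ x^α`, for every
`ε > 0` the function `u + K + ε` is a strict supersolution of `y' = -A y^α + B`. Since `y` is
bounded near `0` while `u` blows up, `y` starts below it on some `[a, t]`, and the comparison
principle keeps it there; finally let `ε → 0`.
-/

open Real Set Filter Topology

noncomputable def blowUpSolution (A α s : ℝ) : ℝ :=
  (A * (α - 1)) ^ (1 / (1 - α)) * s ^ (1 / (1 - α))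

section BlowUpSolution

variable {A α : ℝ}

lemma blowUpSolution_nonneg (hA : 0 < A) (hα : 1 < α) {s : ℝ} (hs : 0 ≤ s) :
    0 ≤ blowUpSolution A α s := by
  have : 0 < A * (α - 1) := mul_pos hA (by linarith)
  unfold blowUpSolution
  positivity

lemma hasDerivAt_blowUpSolution (hA : 0 < A) (hα : 1 < α) {s : ℝ} (hs : 0 < s) :
    HasDerivAt (blowUpSolution A α) (-A * blowUpSolution A α s ^ α) s := by
  set k := A * (α - 1)
  set p := 1 / (1 - α)
  have hk : 0 < k := mul_pos hA (by linarith)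
  have hp_sub : p - 1 = p * α := by simp only [p]; field_simp [(by linarith : 1 - α ≠ 0)]; ring
  have hkp : k * p = -A := by simp only [k, p]; field_simp [(by linarith : 1 - α ≠ 0)]; ring
  refine ((hasDerivAt_rpow_const (p := p) (Or.inl hs.ne')).const_mul (k ^ p)).congr_deriv ?_
  calc k ^ p * (p * s ^ (p - 1))
      = -A * (k ^ (p - 1) * s ^ (p - 1)) := by
        rw [rpow_sub_one hk.ne', ← hkp]
        field_simp
    _ = -A * blowUpSolution A α s ^ α := by
        rw [show blowUpSolution A α s = k ^ p * s ^ p from rfl,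
          mul_rpow (rpow_nonneg hk.le p) (rpow_nonneg hs.le p), ← rpow_mul hk.le,
          ← rpow_mul hs.le, hp_sub]

lemma continuousOn_blowUpSolution : ContinuousOn (blowUpSolution A α) (Ioi 0) :=
  fun _ hs => (continuousAt_const.mul
    (continuousAt_rpow_const _ _ (Or.inl (ne_of_gt hs)))).continuousWithinAt

lemma tendsto_blowUpSolution_nhdsGT_zero (hA : 0 < A) (hα : 1 < α) :
    Tendsto (blowUpSolution A α) (𝓝[>] 0) atTop :=
  (tendsto_rpow_neg_nhdsGT_zero (one_div_neg.2 (by linarith))).const_mul_atTop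
    (rpow_pos_of_pos (mul_pos hA (by linarith)) _)

end BlowUpSolution

lemma rpow_add_rpow_lt_rpow_add_add {u K ε α : ℝ} (hu : 0 ≤ u) (hK : 0 ≤ K) (hε : 0 < ε)
    (hα : 1 ≤ α) : u ^ α + K ^ α < (u + K + ε) ^ α :=
  (add_rpow_le_rpow_add hu hK hα).trans_lt
    (rpow_lt_rpow (by positivity) (by linarith) (by linarith))

lemma le_blowUpSolution_add_of_le {A B α K ε a b : ℝ} {y : ℝ → ℝ} (hA : 0 < A) (hα : 1 < α)
    (hK : 0 ≤ K) (hBK : B ≤ A * K ^ α) (hε : 0 < ε) (ha : 0 < a)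
    (hcont : ContinuousOn y (Icc a b))
    (hderiv : ∀ t ∈ Ico a b, HasDerivAt y (-A * y t ^ α + B) t)
    (hya : y a ≤ blowUpSolution A α a + K + ε) :
    ∀ t ∈ Icc a b, y t ≤ blowUpSolution A α t + K + ε := by
  have hpos : ∀ t ∈ Ico a b, 0 < t := fun t ht => ha.trans_le ht.1
  refine image_le_of_deriv_right_lt_deriv_boundary' hcont
    (fun t ht => (hderiv t ht).hasDerivWithinAt) hya
    (((continuousOn_blowUpSolution.mono fun t ht => ha.trans_le ht.1).add
      continuousOn_const).add continuousOn_const)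
    (fun t ht => (((hasDerivAt_blowUpSolution hA hα (hpos t ht)).add_const K).add_const ε
      ).hasDerivWithinAt) ?_
  intro t ht hyt
  have hu := blowUpSolution_nonneg hA hα (hpos t ht).le
  have := rpow_add_rpow_lt_rpow_add_add hu hK hε hα.le
  rw [hyt]
  nlinarith

theorem stmt1_general (A B α : ℝ) (hA : 0 < A) (hB : 0 ≤ B) (hα : 1 < α)
    (y : ℝ → ℝ)
    (hcont : ContinuousOn y (Set.Ici 0))
    (hderiv : ∀ t : ℝ, 0 < t → HasDerivAt y (-A * (y t) ^ α + B) t) :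
    ∀ t : ℝ, 0 < t →
      y t ≤ (A * (α - 1)) ^ (1 / (1 - α)) * t ^ (1 / (1 - α)) + (B / A) ^ (1 / α) := by
  intro t ht
  have hBA : 0 ≤ B / A := div_nonneg hB hA.le
  have hAK : A * ((B / A) ^ (1 / α)) ^ α = B := by
    rw [one_div, rpow_inv_rpow hBA (by linarith), mul_div_cancel₀ _ hA.ne']
  obtain ⟨M, hM⟩ := (isCompact_Icc.bddAbove_image (hcont.mono Icc_subset_Ici_self) :
    BddAbove (y '' Icc 0 t))
  obtain ⟨a, haM, ha, hat⟩ : ∃ a, M < blowUpSolution A α a ∧ a ∈ Ioo 0 t :=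
    ((tendsto_blowUpSolution_nhdsGT_zero hA hα).eventually_gt_atTop M |>.and
      (Ioo_mem_nhdsGT ht)).exists
  refine le_of_forall_pos_le_add fun ε hε => ?_
  have hya : y a ≤ blowUpSolution A α a + (B / A) ^ (1 / α) + ε := by
    linarith [hM (mem_image_of_mem y ⟨ha.le, hat.le⟩), rpow_nonneg hBA (1 / α)]
  exact le_blowUpSolution_add_of_le hA hα (rpow_nonneg hBA _) hAK.ge hε ha
    (hcont.mono fun s hs => ha.le.trans hs.1) (fun s hs => hderiv s (ha.trans_le hs.1)) hya
    t ⟨hat.le, le_rfl⟩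

/-- For `A > 0`, `B ≥ 0`, `α > 1`, `y₀ ≥ 0` and `y` a nonnegative
solution of `y' = -A y^α + B`, `y 0 = y₀`, one has
`y t ≤ (A(α-1))^(1/(1-α)) * t^(1/(1-α)) + (B/A)^(1/α)` for all `t > 0`. -/
theorem stmt1 (A B α : ℝ) (hA : 0 < A) (hB : 0 ≤ B) (hα : 1 < α)
    (y₀ : ℝ) (hy₀ : 0 ≤ y₀) (y : ℝ → ℝ)
    (hcont : ContinuousOn y (Set.Ici 0))
    (hderiv : ∀ t : ℝ, 0 < t → HasDerivAt y (-A * (y t) ^ α + B) t)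
    (hinit : y 0 = y₀)
    (hnonneg : ∀ t : ℝ, 0 ≤ t → 0 ≤ y t) :
    ∀ t : ℝ, 0 < t →
      y t ≤ (A * (α - 1)) ^ (1 / (1 - α)) * t ^ (1 / (1 - α)) + (B / A) ^ (1 / α) :=
  stmt1_general A B α hA hB hα y hcont hderiv
end

section
/- Let A > 0, B ≥ 0 and α > 1 be real numbers and let y₀ ≥ 0. Then there exists a nonnegative solution y of the initial value problem (⋆), and it satisfies y(t) ≤ max(y₀, (B/A)^{1/α}) for all t ≥ 0. -/
/-!
Separation of variables. If `f > 0` on `[a, b)` and `f b = 0`, the travel time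
`G u = ∫ s in a..u, (f s)⁻¹` is strictly increasing on `[a, b)`, and since a Lipschitz `f`
vanishes at most linearly at `b`, `G` grows like `-log (b - u)` and maps `[a, b)` onto `[0, ∞)`.
Its inverse is a solution of `y' = f y` on `[0, ∞)` that never leaves `[a, b)`; the case `f < 0`
follows by the reflection `s ↦ -s`. For `f s = -A * s ^ α + B`, which is `C¹` as `α > 1`, the
solution starting at `y₀` stays between `y₀` and the equilibrium `(B / A) ^ (1 / α) ≥ 0`.
-/

open Set Filter intervalIntegral MeasureTheory
open scoped NNReal

theorem integral_inv_sub_eq_log {a b u : ℝ} (hau : a ≤ u) (hub : u < b) :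
    ∫ s in a..u, (b - s)⁻¹ = Real.log ((b - a) / (b - u)) := by
  rw [intervalIntegral.integral_comp_sub_left (fun x => x⁻¹), integral_inv]
  rw [uIcc_of_le (by linarith)]
  exact fun h => (sub_pos.2 hub).not_ge h.1

theorem ContinuousOn.intervalIntegrable_of_ordConnected {g : ℝ → ℝ} {s : Set ℝ} [s.OrdConnected]
    (hg : ContinuousOn g s) {u v : ℝ} (hu : u ∈ s) (hv : v ∈ s) :
    IntervalIntegrable g volume u v :=
  (hg.mono (Set.OrdConnected.uIcc_subset ‹_› hu hv)).intervalIntegrable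

section Primitive

variable {g : ℝ → ℝ} {a b : ℝ}

theorem strictMonoOn_primitive_of_pos (hg : ContinuousOn g (Ico a b))
    (hpos : ∀ s ∈ Ico a b, 0 < g s) : StrictMonoOn (fun u => ∫ s in a..u, g s) (Ico a b) := by
  intro u hu v hv huv
  have haI : a ∈ Ico a b := ⟨le_rfl, hu.1.trans_lt hu.2⟩
  have : 0 < ∫ s in u..v, g s := intervalIntegral_pos_of_pos_on
    (hg.intervalIntegrable_of_ordConnected hu hv)
    (fun s hs => hpos s ⟨hu.1.trans hs.1.le, hs.2.trans hv.2⟩) huv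
  rwa [← integral_interval_sub_left (hg.intervalIntegrable_of_ordConnected haI hv)
    (hg.intervalIntegrable_of_ordConnected haI hu), sub_pos] at this

theorem surjOn_primitive_Ici (hg : ContinuousOn g (Ico a b))
    (hbig : ∀ t, 0 ≤ t → ∃ u ∈ Ico a b, t ≤ ∫ s in a..u, g s) :
    SurjOn (fun u => ∫ s in a..u, g s) (Ico a b) (Ici 0) := by
  intro t ht
  obtain ⟨u, hu, htu⟩ := hbig t ht
  have hcont : ContinuousOn (fun v => ∫ s in a..v, g s) (Icc a u) := by
    simpa only [uIcc_of_le hu.1] using continuousOn_primitive_interval'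
      (hg.intervalIntegrable_of_ordConnected ⟨le_rfl, hu.1.trans_lt hu.2⟩ hu) left_mem_uIcc
  obtain ⟨v, hv, rfl⟩ := intermediate_value_Icc hu.1 hcont ⟨by simpa using ht, htu⟩
  exact ⟨v, ⟨hv.1, hv.2.trans_lt hu.2⟩, rfl⟩

end Primitive

theorem exists_le_integral_inv_of_le_mul_sub {f : ℝ → ℝ} {a b K : ℝ} (hab : a < b) (hK : 0 < K)
    (hf : ContinuousOn f (Ico a b)) (hpos : ∀ s ∈ Ico a b, 0 < f s)
    (hle : ∀ s ∈ Ico a b, f s ≤ K * (b - s)) {t : ℝ} (ht : 0 ≤ t) :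
    ∃ u ∈ Ico a b, t ≤ ∫ s in a..u, (f s)⁻¹ := by
  -- `∫ s in a..u, (K * (b - s))⁻¹ = K⁻¹ * log ((b - a) / (b - u))` reaches `t` at this `u`.
  set u := b - (b - a) * Real.exp (-(K * t))
  have hexp : Real.exp (-(K * t)) ≤ 1 := Real.exp_le_one_iff.2 (by nlinarith)
  have hu : u ∈ Ico a b := ⟨by nlinarith, by have := Real.exp_pos (-(K * t)); nlinarith⟩
  have hbu : b - u = (b - a) * Real.exp (-(K * t)) := by ring
  have hsub : Icc a u ⊆ Ico a b := Icc_subset_Ico_right hu.2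
  refine ⟨u, hu, ?_⟩
  calc t = K⁻¹ * Real.log ((b - a) / (b - u)) := by
        rw [hbu, div_mul_cancel_left₀ (sub_pos.2 hab).ne', Real.log_inv, Real.log_exp]
        field_simp
    _ = ∫ s in a..u, (K * (b - s))⁻¹ := by
        simp only [mul_inv, intervalIntegral.integral_const_mul, integral_inv_sub_eq_log hu.1 hu.2]
    _ ≤ ∫ s in a..u, (f s)⁻¹ := by
        refine integral_mono_on hu.1 ?_ ?_ fun s hs =>
          inv_anti₀ (hpos s (hsub hs)) (hle s (hsub hs))
        · refine ContinuousOn.intervalIntegrable_of_Icc hu.1 (ContinuousOn.inv₀ (by fun_prop) ?_)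
          intro s hs
          have := (hsub hs).2
          exact mul_ne_zero hK.ne' (sub_pos.2 this).ne'
        · exact (hf.inv₀ fun s hs => (hpos s hs).ne').intervalIntegrable_of_ordConnected
            ⟨le_rfl, hab⟩ hu

theorem StrictMonoOn.exists_inverse_hasDerivAt {G G' : ℝ → ℝ} {a b : ℝ}
    (hmono : StrictMonoOn G (Ico a b)) (ha : G a = 0) (hsurj : SurjOn G (Ico a b) (Ici 0))
    (hderiv : ∀ u ∈ Ioo a b, HasDerivAt G (G' u) u) (hG' : ∀ u ∈ Ioo a b, G' u ≠ 0) :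
    ∃ y : ℝ → ℝ, ContinuousOn y (Ici 0) ∧ (∀ t, 0 < t → HasDerivAt y (G' (y t))⁻¹ t) ∧
      y 0 = a ∧ MapsTo y (Ici 0) (Ico a b) := by
  obtain ⟨u, hu, -⟩ := hsurj (self_mem_Ici : (0 : ℝ) ∈ Ici 0)
  have haI : a ∈ Ico a b := ⟨le_rfl, hu.1.trans_lt hu.2⟩
  set y := Function.invFunOn G (Ico a b)
  have hmaps : MapsTo y (Ici 0) (Ico a b) := hsurj.mapsTo_invFunOn
  have hGy : ∀ t ∈ Ici 0, G (y t) = t := hsurj.rightInvOn_invFunOn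
  have hyG : ∀ u ∈ Ico a b, y (G u) = u := hmono.injOn.leftInvOn_invFunOn
  have hy0 : y 0 = a := hmono.injOn (hmaps self_mem_Ici) haI (by rw [hGy 0 self_mem_Ici, ha])
  have hymono : StrictMonoOn y (Ici 0) := fun s hs t ht hst =>
    (hmono.lt_iff_lt (hmaps hs) (hmaps ht)).1 (by rwa [hGy s hs, hGy t ht])
  have himage : Ico a b ⊆ y '' Ici 0 := fun u hu =>
    ⟨G u, ha ▸ hmono.monotoneOn haI hu hu.1, hyG u hu⟩
  have hyIoo : ∀ t, 0 < t → y t ∈ Ioo a b := fun t ht =>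
    ⟨(hmaps ht.le).1.lt_of_ne fun h => ht.ne (by rw [← hGy t ht.le, ← h, ha]), (hmaps ht.le).2⟩
  have hcontAt : ∀ t, 0 < t → ContinuousAt y t := fun t ht =>
    hymono.continuousAt_of_image_mem_nhds (Ici_mem_nhds ht)
      (mem_of_superset (Ioo_mem_nhds (hyIoo t ht).1 (hyIoo t ht).2)
        (Ioo_subset_Ico_self.trans himage))
  refine ⟨y, fun t ht => ?_, fun t ht => ?_, hy0, hmaps⟩
  · rcases (mem_Ici.1 ht).eq_or_lt with rfl | ht
    · exact hymono.continuousWithinAt_right_of_image_mem_nhdsWithin self_mem_nhdsWithin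
        (mem_of_superset (by rw [hy0]; exact Ico_mem_nhdsGE haI.2) himage)
    · exact (hcontAt t ht).continuousWithinAt
  · exact .of_local_left_inverse (hcontAt t ht) (hderiv _ (hyIoo t ht)) (hG' _ (hyIoo t ht))
      (eventually_of_mem (Ioi_mem_nhds ht) fun s hs => hGy s (mem_Ici.2 (le_of_lt hs)))

theorem exists_solution_mem_Ico {f : ℝ → ℝ} {K : ℝ≥0} {a b : ℝ} (hab : a < b)
    (hf : LipschitzOnWith K f (Icc a b)) (hfb : f b = 0) (hpos : ∀ s ∈ Ico a b, 0 < f s) :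
    ∃ y : ℝ → ℝ, ContinuousOn y (Ici 0) ∧ (∀ t, 0 < t → HasDerivAt y (f (y t)) t) ∧
      y 0 = a ∧ MapsTo y (Ici 0) (Ico a b) := by
  have hfc : ContinuousOn f (Ico a b) := hf.continuousOn.mono Ico_subset_Icc_self
  have hg : ContinuousOn (fun s => (f s)⁻¹) (Ico a b) := hfc.inv₀ fun s hs => (hpos s hs).ne'
  have hle : ∀ s ∈ Ico a b, f s ≤ K * (b - s) := fun s hs => by
    have := hf.dist_le_mul s (Ico_subset_Icc_self hs) b (right_mem_Icc.2 hab.le)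
    rw [hfb, Real.dist_eq, Real.dist_eq, sub_zero, abs_of_pos (hpos s hs),
      abs_of_neg (sub_neg.2 hs.2)] at this
    linarith
  have hK : 0 < (K : ℝ) := by
    have := (hpos a ⟨le_rfl, hab⟩).trans_le (hle a ⟨le_rfl, hab⟩)
    exact pos_of_mul_pos_left this (sub_pos.2 hab).le
  obtain ⟨y, hyc, hyd, hy0, hmaps⟩ :=
    (strictMonoOn_primitive_of_pos hg fun s hs => inv_pos.2 (hpos s hs)).exists_inverse_hasDerivAt
      integral_same
      (surjOn_primitive_Ici hg fun _ => exists_le_integral_inv_of_le_mul_sub hab hK hfc hpos hle)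
      (fun u hu => integral_hasDerivAt_right
        (hg.intervalIntegrable_of_ordConnected ⟨le_rfl, hab⟩ (Ioo_subset_Ico_self hu))
        ((hg.mono Ioo_subset_Ico_self).stronglyMeasurableAtFilter isOpen_Ioo u hu)
        ((hg.mono Ioo_subset_Ico_self).continuousAt (Ioo_mem_nhds hu.1 hu.2)))
      (fun u hu => inv_ne_zero (hpos u (Ioo_subset_Ico_self hu)).ne')
  exact ⟨y, hyc, fun t ht => by simpa using hyd t ht, hy0, hmaps⟩

theorem exists_solution_mem_Ioc {f : ℝ → ℝ} {K : ℝ≥0} {a b : ℝ} (hba : b < a)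
    (hf : LipschitzOnWith K f (Icc b a)) (hfb : f b = 0) (hneg : ∀ s ∈ Ioc b a, f s < 0) :
    ∃ y : ℝ → ℝ, ContinuousOn y (Ici 0) ∧ (∀ t, 0 < t → HasDerivAt y (f (y t)) t) ∧
      y 0 = a ∧ MapsTo y (Ici 0) (Ioc b a) := by
  have hf' : LipschitzOnWith K (fun s => -f (-s)) (Icc (-a) (-b)) :=
    LipschitzOnWith.of_dist_le_mul fun x hx y hy => by
      simpa [dist_neg_neg] using
        hf.dist_le_mul (-x) ⟨le_neg.1 hx.2, neg_le.1 hx.1⟩ (-y) ⟨le_neg.1 hy.2, neg_le.1 hy.1⟩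
  obtain ⟨z, hzc, hzd, hz0, hmaps⟩ := exists_solution_mem_Ico (neg_lt_neg hba) hf'
    (by simp [hfb]) fun s hs => neg_pos.2 (hneg (-s) ⟨lt_neg.2 hs.2, neg_le.2 hs.1⟩)
  refine ⟨fun t => -z t, hzc.neg, fun t ht => (hzd t ht).neg.congr_deriv (neg_neg _), by simp [hz0],
    fun t ht => ?_⟩
  obtain ⟨h1, h2⟩ := hmaps ht
  exact ⟨lt_neg.2 h2, neg_le.2 h1⟩

theorem exists_solution_mem_uIcc {f : ℝ → ℝ} {K : ℝ≥0} {y₀ c : ℝ}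
    (hf : LipschitzOnWith K f (uIcc y₀ c)) (hfc : f c = 0) (hpos : ∀ s ∈ Ico y₀ c, 0 < f s)
    (hneg : ∀ s ∈ Ioc c y₀, f s < 0) :
    ∃ y : ℝ → ℝ, ContinuousOn y (Ici 0) ∧ (∀ t, 0 < t → HasDerivAt y (f (y t)) t) ∧
      y 0 = y₀ ∧ MapsTo y (Ici 0) (uIcc y₀ c) := by
  rcases lt_trichotomy y₀ c with hlt | rfl | hgt
  · rw [uIcc_of_le hlt.le] at hf ⊢
    obtain ⟨y, hyc, hyd, hy0, hmaps⟩ := exists_solution_mem_Ico hlt hf hfc hpos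
    exact ⟨y, hyc, hyd, hy0, hmaps.mono_right Ico_subset_Icc_self⟩
  · exact ⟨fun _ => y₀, continuousOn_const, fun t _ => hfc ▸ hasDerivAt_const t y₀, rfl,
      fun _ _ => left_mem_uIcc⟩
  · rw [uIcc_of_ge hgt.le] at hf ⊢
    obtain ⟨y, hyc, hyd, hy0, hmaps⟩ := exists_solution_mem_Ioc hgt hf hfc hneg
    exact ⟨y, hyc, hyd, hy0, hmaps.mono_right Ioc_subset_Icc_self⟩

/-- For `A > 0`, `B ≥ 0`, `α > 1` and `y₀ ≥ 0` there exists a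
nonnegative solution `y` of `y' = -A y^α + B`, `y 0 = y₀`, and it satisfies
`y t ≤ max y₀ ((B/A)^(1/α))` for all `t ≥ 0`. -/
theorem stmt6 (A B α : ℝ) (hA : 0 < A) (hB : 0 ≤ B) (hα : 1 < α)
    (y₀ : ℝ) (hy₀ : 0 ≤ y₀) :
    ∃ y : ℝ → ℝ,
      ContinuousOn y (Set.Ici 0) ∧
      (∀ t : ℝ, 0 < t → HasDerivAt y (-A * (y t) ^ α + B) t) ∧
      y 0 = y₀ ∧
      (∀ t : ℝ, 0 ≤ t → 0 ≤ y t) ∧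
      (∀ t : ℝ, 0 ≤ t → y t ≤ max y₀ ((B / A) ^ (1 / α))) := by
  set c := (B / A) ^ (1 / α) with hc_def
  have hBA : 0 ≤ B / A := div_nonneg hB hA.le
  have hc : 0 ≤ c := Real.rpow_nonneg hBA _
  have hα0 : 0 < α := zero_lt_one.trans hα
  have hlt_c : ∀ s, 0 ≤ s → (s < c ↔ A * s ^ α < B) := fun s hs => by
    rw [hc_def, one_div, Real.lt_rpow_inv_iff_of_pos hs hBA hα0, lt_div_iff₀' hA]
  have hc_lt : ∀ s, 0 ≤ s → (c < s ↔ B < A * s ^ α) := fun s hs => by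
    rw [hc_def, one_div, Real.rpow_inv_lt_iff_of_pos hBA hs hα0, div_lt_iff₀' hA]
  obtain ⟨K, hlip⟩ : ∃ K, LipschitzOnWith K (fun s => -A * s ^ α + B) (uIcc y₀ c) :=
    ContDiffOn.exists_lipschitzOnWith (n := 1)
      ((contDiff_const.mul (Real.contDiff_rpow_const_of_le (by simpa using hα.le))).add
        contDiff_const).contDiffOn one_ne_zero (convex_uIcc _ _) isCompact_uIcc
  obtain ⟨y, hyc, hyd, hy0, hmaps⟩ := exists_solution_mem_uIcc hlip
    (by simp [c, ← Real.rpow_mul hBA, hα0.ne', mul_div_cancel₀ B hA.ne'])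
    (fun s hs => by linarith [(hlt_c s (hy₀.trans hs.1)).1 hs.2])
    (fun s hs => by linarith [(hc_lt s (hc.trans hs.1.le)).1 hs.1])
  refine ⟨y, hyc, hyd, hy0, fun t ht => ?_, fun t ht => (hmaps ht).2⟩
  exact le_min hy₀ hc |>.trans (hmaps ht).1
end

section
/- Let A > 0, B ≥ 0 and α > 1 be real numbers and let y₀ ≥ 0. If y and ỹ are both nonnegative solutions of the initial value problem (⋆) with the same initial value y₀, then y(t) = ỹ(t) for all t ≥ 0. -/
/-!
The right-hand side `x ↦ -A x ^ α + B` is continuous, so the derivative of a solution extends to a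
right derivative at `0`, where the equation is not assumed. On `[0, T]` both solutions are
continuous and nonnegative, hence stay in some `[0, C]`, on which `x ↦ x ^ α` is Lipschitz
because `α ≥ 1`; Grönwall's uniqueness theorem then applies on `[0, T]`.
-/

open Set

theorem Real.lipschitzOnWith_rpow_Icc {α : ℝ} (hα : 1 ≤ α) (C : ℝ) :
    LipschitzOnWith (α * C ^ (α - 1)).toNNReal (fun x : ℝ => x ^ α) (Icc 0 C) := by
  refine (convex_Icc 0 C).lipschitzOnWith_of_nnnorm_hasDerivWithin_le
    (fun x _ => (Real.hasDerivAt_rpow_const (Or.inr hα)).hasDerivWithinAt) fun x hx => ?_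
  have hx₀ : 0 ≤ x := hx.1
  rw [← NNReal.coe_le_coe, coe_nnnorm, Real.norm_eq_abs,
    abs_of_nonneg (by positivity), Real.coe_toNNReal']
  exact (mul_le_mul_of_nonneg_left
    (Real.rpow_le_rpow hx₀ hx.2 (by linarith)) (by linarith)).trans (le_max_left _ _)

theorem hasDerivWithinAt_Ici_of_forall_gt_hasDerivAt {E : Type*} [NormedAddCommGroup E]
    [NormedSpace ℝ E] {v : E → E} {f : ℝ → E} {a : ℝ} (hv : ContinuousAt v (f a))
    (hf : ContinuousOn f (Ici a)) (hf' : ∀ t, a < t → HasDerivAt f (v (f t)) t) :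
    HasDerivWithinAt f (v (f a)) (Ici a) a := by
  have hfa : ContinuousWithinAt f (Ioi a) a :=
    (hf a self_mem_Ici).mono Ioi_subset_Ici_self
  refine hasDerivWithinAt_Ici_of_tendsto_deriv
    (fun t ht => (hf' t ht).differentiableAt.differentiableWithinAt) hfa
    self_mem_nhdsWithin ?_
  refine (hv.tendsto.comp hfa).congr' ?_
  filter_upwards [self_mem_nhdsWithin] with t ht
  exact ((hf' t ht).deriv).symm

theorem stmt7_general (A B α : ℝ) (hα : 1 < α)
    (y₀ : ℝ) (y z : ℝ → ℝ)
    (hcont : ContinuousOn y (Set.Ici 0))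
    (hderiv : ∀ t : ℝ, 0 < t → HasDerivAt y (-A * (y t) ^ α + B) t)
    (hinit : y 0 = y₀)
    (hnonneg : ∀ t : ℝ, 0 ≤ t → 0 ≤ y t)
    (hcont' : ContinuousOn z (Set.Ici 0))
    (hderiv' : ∀ t : ℝ, 0 < t → HasDerivAt z (-A * (z t) ^ α + B) t)
    (hinit' : z 0 = y₀)
    (hnonneg' : ∀ t : ℝ, 0 ≤ t → 0 ≤ z t) :
    ∀ t : ℝ, 0 ≤ t → y t = z t := by
  intro T hT
  set v : ℝ → ℝ := fun x => -A * x ^ α + B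
  have hv : Continuous v :=
    (continuous_const.mul (Real.continuous_rpow_const (by linarith))).add continuous_const
  have hsol : ∀ f : ℝ → ℝ, ContinuousOn f (Ici 0) → (∀ t, 0 < t → HasDerivAt f (v (f t)) t) →
      ∀ t ∈ Ico (0 : ℝ) T, HasDerivWithinAt f (v (f t)) (Ici t) t := by
    rintro f hf hf' t ⟨ht₀, -⟩
    rcases ht₀.eq_or_lt with rfl | htpos
    · exact hasDerivWithinAt_Ici_of_forall_gt_hasDerivAt hv.continuousAt hf hf'
    · exact (hf' t htpos).hasDerivWithinAt
  have hIcc : Icc 0 T ⊆ Ici (0 : ℝ) := Icc_subset_Ici_self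
  obtain ⟨Cy, hCy⟩ := isCompact_Icc.bddAbove_image (hcont.mono hIcc)
  obtain ⟨Cz, hCz⟩ := isCompact_Icc.bddAbove_image (hcont'.mono hIcc)
  set C := max Cy Cz
  have hLip : LipschitzOnWith _ v (Icc 0 C) :=
    ((lipschitzWith_smul (-A)).comp_lipschitzOnWith
      (Real.lipschitzOnWith_rpow_Icc hα.le C)).add (LipschitzWith.const B).lipschitzOnWith
  have hyC : ∀ t ∈ Ico 0 T, y t ∈ Icc 0 C := fun t ht =>
    ⟨hnonneg t ht.1, le_max_of_le_left (hCy (mem_image_of_mem y (Ico_subset_Icc_self ht)))⟩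
  have hzC : ∀ t ∈ Ico 0 T, z t ∈ Icc 0 C := fun t ht =>
    ⟨hnonneg' t ht.1, le_max_of_le_right (hCz (mem_image_of_mem z (Ico_subset_Icc_self ht)))⟩
  exact ODE_solution_unique_of_mem_Icc_right (fun _ _ => hLip)
    (hcont.mono hIcc) (hsol y hcont hderiv) hyC (hcont'.mono hIcc) (hsol z hcont' hderiv') hzC
    (hinit.trans hinit'.symm) ⟨hT, le_rfl⟩

/-- For `A > 0`, `B ≥ 0`, `α > 1` and `y₀ ≥ 0`, any two nonnegative
solutions of `y' = -A y^α + B`, `y 0 = y₀` coincide on `[0,∞)`. -/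
theorem stmt7 (A B α : ℝ) (hA : 0 < A) (hB : 0 ≤ B) (hα : 1 < α)
    (y₀ : ℝ) (hy₀ : 0 ≤ y₀) (y z : ℝ → ℝ)
    (hcont : ContinuousOn y (Set.Ici 0))
    (hderiv : ∀ t : ℝ, 0 < t → HasDerivAt y (-A * (y t) ^ α + B) t)
    (hinit : y 0 = y₀)
    (hnonneg : ∀ t : ℝ, 0 ≤ t → 0 ≤ y t)
    (hcont' : ContinuousOn z (Set.Ici 0))
    (hderiv' : ∀ t : ℝ, 0 < t → HasDerivAt z (-A * (z t) ^ α + B) t)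
    (hinit' : z 0 = y₀)
    (hnonneg' : ∀ t : ℝ, 0 ≤ t → 0 ≤ z t) :
    ∀ t : ℝ, 0 ≤ t → y t = z t :=
  stmt7_general A B α hα y₀ y z hcont hderiv hinit hnonneg hcont' hderiv' hinit' hnonneg'
end
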